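/- Let R be a commutative ring of prime characteristic p > 0, let 𝔟₁, …, 𝔟ₘ ⊆ R be ideals with 𝔟ᵢ generated by at most lᵢ elements, and let n₁, …, nₘ ≥ 0 be integers with Σᵢ nᵢ = n. Set sᵢ := max{ 0, ⌈nᵢ/p^e⌉ − lᵢ } and l := Σᵢ lᵢ. If each 𝔟ᵢ satisfies 𝔟ᵢ^{nᵢ} = (𝔟ᵢ^{sᵢ})^[p^e] · 𝔟ᵢ^{nᵢ − p^e sᵢ} and n > p^e(l − 1), then ∏ᵢ 𝔟ᵢ^{nᵢ} ⊆ ((𝔟₁ + ⋯ + 𝔟ₘ)^{⌈n/p^e⌉ − l})^[p^e] · (𝔟₁ + ⋯ + 𝔟ₘ)^{n − p^e(⌈n/p^e⌉ − l)}. -/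

import Mathlib

/-!
Writing `q = p ^ e`, the factorisation hypothesis turns `∏ 𝔟ᵢ^{nᵢ}` into
`(∏ 𝔟ᵢ^{sᵢ})^[q] · ∏ 𝔟ᵢ^{nᵢ - q sᵢ}`, because in characteristic `p` the Frobenius power is the
extension of ideals along the ring endomorphism `x ↦ x ^ q`. Enlarging every `𝔟ᵢ` to
`B = 𝔟₁ + ⋯ + 𝔟ₘ` gives `(B^{Σ sᵢ})^[q] · B^{Σ (nᵢ - q sᵢ)}`. Since `⌈n/q⌉ ≤ Σ ⌈nᵢ/q⌉ ≤ Σ sᵢ + l`,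
the exponent `Σ sᵢ` is at least `⌈n/q⌉ - l`, and the surplus Frobenius power is absorbed into an
ordinary power of `B` through `J^[q] ⊆ J^q`.
-/

/-- The Frobenius power `I^[q]` of an ideal. -/
def frobPow {R : Type*} [CommSemiring R] (I : Ideal R) (q : ℕ) : Ideal R :=
  Ideal.span ((fun f => f ^ q) '' (I : Set R))

open Finset

theorem Int.ceil_sum_le {ι α : Type*} [Ring α] [LinearOrder α] [FloorRing α] [IsOrderedRing α]
    (t : Finset ι) (f : ι → α) : ⌈∑ i ∈ t, f i⌉ ≤ ∑ i ∈ t, ⌈f i⌉ := by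
  classical
  induction t using Finset.induction with
  | empty => simp
  | insert j t hj ih =>
    rw [sum_insert hj, sum_insert hj]
    exact (Int.ceil_add_le _ _).trans (add_le_add_right ih _)

section FrobeniusPower

variable {R : Type*} [CommSemiring R]

theorem frobPow_mono {I J : Ideal R} (h : I ≤ J) (q : ℕ) : frobPow I q ≤ frobPow J q :=
  Ideal.span_mono (Set.image_mono h)

theorem frobPow_le_pow (I : Ideal R) (q : ℕ) : frobPow I q ≤ I ^ q :=
  Ideal.span_le.2 <| by
    rintro _ ⟨x, hx, rfl⟩
    exact Ideal.pow_mem_pow hx q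

variable (p : ℕ) [ExpChar R p] (e : ℕ)

theorem frobPow_eq_map_iterateFrobenius (I : Ideal R) :
    frobPow I (p ^ e) = I.map (iterateFrobenius R p e) :=
  rfl

theorem frobPow_mul (I J : Ideal R) :
    frobPow (I * J) (p ^ e) = frobPow I (p ^ e) * frobPow J (p ^ e) := by
  simp only [frobPow_eq_map_iterateFrobenius, Ideal.map_mul]

theorem frobPow_prod {ι : Type*} (t : Finset ι) (I : ι → Ideal R) :
    frobPow (∏ i ∈ t, I i) (p ^ e) = ∏ i ∈ t, frobPow (I i) (p ^ e) :=
  map_prod (Ideal.mapHom (iterateFrobenius R p e)) I t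

theorem prod_frobPow_pow_mul_pow_le {ι : Type*} (t : Finset ι) {𝔟 : ι → Ideal R} {B : Ideal R}
    (h𝔟B : ∀ i ∈ t, 𝔟 i ≤ B) (s a : ι → ℕ) :
    ∏ i ∈ t, frobPow (𝔟 i ^ s i) (p ^ e) * 𝔟 i ^ a i ≤
      frobPow (B ^ ∑ i ∈ t, s i) (p ^ e) * B ^ ∑ i ∈ t, a i := by
  rw [prod_mul_distrib, ← frobPow_prod, ← prod_pow_eq_pow_sum, ← prod_pow_eq_pow_sum]
  exact mul_le_mul' (frobPow_mono (prod_le_prod' fun i hi => pow_le_pow_left' (h𝔟B i hi) _) _)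
    (prod_le_prod' fun i hi => pow_le_pow_left' (h𝔟B i hi) _)

theorem frobPow_pow_le_frobPow_pow_mul (B : Ideal R) {k a : ℕ} (hka : k ≤ a) :
    frobPow (B ^ a) (p ^ e) ≤ frobPow (B ^ k) (p ^ e) * B ^ (p ^ e * (a - k)) := by
  obtain ⟨d, rfl⟩ := Nat.exists_eq_add_of_le hka
  rw [pow_add, frobPow_mul, Nat.add_sub_cancel_left, mul_comm (p ^ e), pow_mul]
  exact mul_le_mul_right (frobPow_le_pow _ _) _

theorem frobPow_pow_mul_pow_le (B : Ideal R) {k a b N : ℕ} (hka : k ≤ a)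
    (hN : N ≤ p ^ e * a + b - p ^ e * k) :
    frobPow (B ^ a) (p ^ e) * B ^ b ≤ frobPow (B ^ k) (p ^ e) * B ^ N := by
  have hq_sub := Nat.mul_sub (p ^ e) a k
  have hqk := Nat.mul_le_mul_left (p ^ e) hka
  calc frobPow (B ^ a) (p ^ e) * B ^ b
      ≤ frobPow (B ^ k) (p ^ e) * B ^ (p ^ e * (a - k)) * B ^ b :=
        mul_le_mul_left (frobPow_pow_le_frobPow_pow_mul p e B hka) _
    _ = frobPow (B ^ k) (p ^ e) * B ^ (p ^ e * (a - k) + b) := by rw [mul_assoc, pow_add]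
    _ ≤ frobPow (B ^ k) (p ^ e) * B ^ N := mul_le_mul_right (Ideal.pow_le_pow_right (by omega)) _

end FrobeniusPower

theorem prod_pow_subset_frobPow_general {R : Type*} [CommRing R] (p : ℕ) (hp : p.Prime) [CharP R p]
    (e m : ℕ) (𝔟 : Fin m → Ideal R) (li : Fin m → ℕ)
    (ni : Fin m → ℕ) (n : ℕ) (hn : n = ∑ i, ni i)
    (c : Fin m → ℕ) (hc : ∀ i, (c i : ℤ) = ⌈(ni i : ℚ) / ((p : ℚ) ^ e)⌉)
    (s : Fin m → ℕ) (hs : ∀ i, s i = max 0 (c i - li i))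
    (l : ℕ) (hl : l = ∑ i, li i)
    (C : ℕ) (hC : (C : ℤ) = ⌈(n : ℚ) / ((p : ℚ) ^ e)⌉)
    (hfact : ∀ i, 𝔟 i ^ ni i = frobPow (𝔟 i ^ s i) (p ^ e) * 𝔟 i ^ (ni i - p ^ e * s i)) :
    ∏ i, 𝔟 i ^ ni i ≤
      frobPow ((∑ i, 𝔟 i) ^ (C - l)) (p ^ e) * (∑ i, 𝔟 i) ^ (n - p ^ e * (C - l)) := by
  have := ExpChar.prime (R := R) hp
  set q := p ^ e
  set B := ∑ i, 𝔟 i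
  have hC_le : C ≤ ∑ i, c i := by
    have : (C : ℤ) ≤ ∑ i, (c i : ℤ) := by
      simp only [hC, hc, hn, Nat.cast_sum, sum_div]
      exact Int.ceil_sum_le _ _
    exact_mod_cast this
  have hCl : C - l ≤ ∑ i, s i := by
    have : ∑ i, c i ≤ ∑ i, (s i + li i) := sum_le_sum fun i _ => by rw [hs i]; omega
    rw [sum_add_distrib, ← hl] at this
    omega
  have hn_le : n ≤ q * ∑ i, s i + ∑ i, (ni i - q * s i) := by
    rw [hn, mul_sum, ← sum_add_distrib]
    exact sum_le_sum fun i _ => by omega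
  calc ∏ i, 𝔟 i ^ ni i = ∏ i, frobPow (𝔟 i ^ s i) q * 𝔟 i ^ (ni i - q * s i) :=
        prod_congr rfl fun i _ => hfact i
    _ ≤ frobPow (B ^ ∑ i, s i) q * B ^ ∑ i, (ni i - q * s i) :=
        prod_frobPow_pow_mul_pow_le p e univ
          (fun i _ => single_le_sum_of_canonicallyOrdered (mem_univ i)) s _
    _ ≤ frobPow (B ^ (C - l)) q * B ^ (n - q * (C - l)) :=
        frobPow_pow_mul_pow_le p e B hCl (Nat.sub_le_sub_right hn_le _)

/-- Multi-ideal step of the Skoda-type lemma: with `sᵢ = max(0, ⌈nᵢ/p^e⌉ − lᵢ)` and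
`l = Σᵢ lᵢ`, if each `𝔟ᵢ^{nᵢ} = (𝔟ᵢ^{sᵢ})^[p^e]·𝔟ᵢ^{nᵢ − p^e sᵢ}` and `n > p^e(l−1)`,
then `∏ᵢ 𝔟ᵢ^{nᵢ} ⊆ ((Σᵢ 𝔟ᵢ)^{⌈n/p^e⌉−l})^[p^e] · (Σᵢ 𝔟ᵢ)^{n − p^e(⌈n/p^e⌉−l)}`. -/
theorem prod_pow_subset_frobPow {R : Type*} [CommRing R] (p : ℕ) (hp : p.Prime) [CharP R p]
    (e m : ℕ) (𝔟 : Fin m → Ideal R) (li : Fin m → ℕ)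
    (hgen : ∀ i, ∃ G : Finset R, G.card ≤ li i ∧ Ideal.span (G : Set R) = 𝔟 i)
    (ni : Fin m → ℕ) (n : ℕ) (hn : n = ∑ i, ni i)
    (c : Fin m → ℕ) (hc : ∀ i, (c i : ℤ) = ⌈(ni i : ℚ) / ((p : ℚ) ^ e)⌉)
    (s : Fin m → ℕ) (hs : ∀ i, s i = max 0 (c i - li i))
    (l : ℕ) (hl : l = ∑ i, li i)
    (C : ℕ) (hC : (C : ℤ) = ⌈(n : ℚ) / ((p : ℚ) ^ e)⌉)
    (hfact : ∀ i, 𝔟 i ^ ni i = frobPow (𝔟 i ^ s i) (p ^ e) * 𝔟 i ^ (ni i - p ^ e * s i))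
    (hbig : (p : ℤ) ^ e * ((l : ℤ) - 1) < (n : ℤ)) :
    ∏ i, 𝔟 i ^ ni i ≤
      frobPow ((∑ i, 𝔟 i) ^ (C - l)) (p ^ e) * (∑ i, 𝔟 i) ^ (n - p ^ e * (C - l)) :=
  prod_pow_subset_frobPow_general p hp e m 𝔟 li ni n hn c hc s hs l hl C hC hfact
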